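/- Let M ∈ ℕ with M ≥ 1, let a_1, …, a_M be rationally independent real numbers, and let σ_P : ℝ → ℝ be periodic with period T > 0 (σ_P(x+T) = σ_P(x) for all x) such that there exist x₁ < x₂ with x₂ − x₁ < T and σ_P continuous on [x₁, x₂]. Write σ_P^min := min_{x∈[x₁,x₂]} σ_P(x) and σ_P^max := max_{x∈[x₁,x₂]} σ_P(x). Then the set {(σ_P(w·a_1), σ_P(w·a_2), …, σ_P(w·a_M)) : w ∈ ℝ} is dense in [σ_P^min, σ_P^max]^M. Moreover, if σ_P^min < σ_P^max, then the set {(u·σ_P(w·a_1)+v, u·σ_P(w·a_2)+v, …, u·σ_P(w·a_M)+v) : u, v, w ∈ ℝ} is dense in ℝ^M. -/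

import Mathlib

open Finset Real Set MeasureTheory

noncomputable section

/-- Matrix–vector product with explicit inner dimension `m`. -/
def mulVecN (W : ℕ → ℕ → ℝ) (m : ℕ) (v : ℕ → ℝ) : ℕ → ℝ :=
  fun i => ∑ j ∈ Finset.range m, W i j * v j

/-- Matrix–matrix product with explicit inner dimension `m`. -/
def matMulN (A : ℕ → ℕ → ℝ) (m : ℕ) (B : ℕ → ℕ → ℝ) : ℕ → ℕ → ℝ :=
  fun i j => ∑ t ∈ Finset.range m, A i t * B t j

/-- The ReLU activation. -/
def reluF : ℝ → ℝ := fun x => max x 0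

/-- The floor activation. -/
def floorF : ℝ → ℝ := fun x => (⌊x⌋ : ℝ)

/-- Hidden layers of a feedforward network acting on vectors:
`ffLayers dims Wt b act l x` is the output of the `l`-th hidden layer. -/
def ffLayers (dims : ℕ → ℕ) (Wt : ℕ → ℕ → ℕ → ℝ) (b : ℕ → ℕ → ℝ)
    (act : ℕ → ℕ → ℝ → ℝ) : ℕ → (ℕ → ℝ) → ℕ → ℝ
  | 0, x => x
  | l + 1, x => fun i =>
      act (l + 1) i (mulVecN (Wt (l + 1)) (dims l) (ffLayers dims Wt b act l x) i + b (l + 1) i)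

/-- `f` is a feedforward neural network function from `ℝ^k` to `ℝ^{k'}` of depth `L` and
width `W`, whose activation functions (which may vary between rows and layers) all belong
to `A`.  Vectors are represented as functions `ℕ → ℝ`; only the first `k` coordinates of the
input and the first `k'` coordinates of the output are relevant. -/
def IsFFNet (k k' L W : ℕ) (A : Set (ℝ → ℝ)) (f : (ℕ → ℝ) → ℕ → ℝ) : Prop :=
  ∃ (dims : ℕ → ℕ) (Wt : ℕ → ℕ → ℕ → ℝ) (b : ℕ → ℕ → ℝ) (act : ℕ → ℕ → ℝ → ℝ),
    dims 0 = k ∧ dims L = k' ∧ (∀ l, 0 < l → l < L → dims l ≤ W) ∧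
    (∀ l i, act l i ∈ A) ∧
    ∀ x, f x = mulVecN (Wt L) (dims (L - 1)) (ffLayers dims Wt b act (L - 1) x)

/-- Hidden layers of a feedforward block acting columnwise on matrices, with
column-dependent biases. -/
def ffBlockLayers (dims : ℕ → ℕ) (Wt : ℕ → ℕ → ℕ → ℝ) (B : ℕ → ℕ → ℕ → ℝ)
    (act : ℕ → ℕ → ℝ → ℝ) : ℕ → (ℕ → ℕ → ℝ) → ℕ → ℕ → ℝ
  | 0, X => X
  | l + 1, X => fun i s =>
      act (l + 1) i
        (mulVecN (Wt (l + 1)) (dims l) (fun t => ffBlockLayers dims Wt B act l X t s) i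
          + B (l + 1) i s)

/-- `F` is a feedforward block from `ℝ^{k×n}` to `ℝ^{k'×n}` of depth `L` and width `W`,
with activation functions in `A`; it acts on each column by the same affine maps, the bias
matrices may have distinct columns, and in each layer every row uses some activation from
`A` (possibly varying between rows and layers). -/
def IsFFBlock (k k' L W : ℕ) (A : Set (ℝ → ℝ)) (F : (ℕ → ℕ → ℝ) → ℕ → ℕ → ℝ) : Prop :=
  ∃ (dims : ℕ → ℕ) (Wt : ℕ → ℕ → ℕ → ℝ) (B : ℕ → ℕ → ℕ → ℝ) (act : ℕ → ℕ → ℝ → ℝ),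
    dims 0 = k ∧ dims L = k' ∧ (∀ l, 0 < l → l < L → dims l ≤ W) ∧
    (∀ l i, act l i ∈ A) ∧
    ∀ X i s,
      F X i s = mulVecN (Wt L) (dims (L - 1))
        (fun t => ffBlockLayers dims Wt B act (L - 1) X t s) i

/-- `F` is a single-head softmax self-attention layer on `m × n` matrices:
`F(X) = X + W_O W_V X σ_S[(W_K X)ᵀ (W_Q X)]`, where the softmax is applied columnwise. -/
def IsSelfAttn (m n : ℕ) (F : (ℕ → ℕ → ℝ) → ℕ → ℕ → ℝ) : Prop :=
  ∃ (hs : ℕ) (WO WV WK WQ : ℕ → ℕ → ℝ),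
    ∀ X i j,
      F X i j = X i j +
        matMulN (matMulN WO hs WV) m
          (matMulN X n (fun a b =>
            Real.exp (∑ u ∈ Finset.range hs, matMulN WK m X u a * matMulN WQ m X u b) /
              ∑ t ∈ Finset.range n,
                Real.exp (∑ u ∈ Finset.range hs, matMulN WK m X u t * matMulN WQ m X u b))) i j

/-- An affine map on matrices, acting columnwise: `A(Y) = W Y + b` with `W` a `k'×k`
matrix and `b` a bias matrix. -/
def IsAffineM (k : ℕ) (A : (ℕ → ℕ → ℝ) → ℕ → ℕ → ℝ) : Prop :=
  ∃ (W : ℕ → ℕ → ℝ) (b : ℕ → ℕ → ℝ),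
    ∀ Y i s, A Y i s = mulVecN W k (fun t => Y t s) i + b i s

/-- Embedding of a `d × n` real matrix into the `ℕ`-indexed representation. -/
def embedM {d n : ℕ} (X : Fin d → Fin n → ℝ) : ℕ → ℕ → ℝ :=
  fun i j => if h : i < d ∧ j < n then X ⟨i, h.1⟩ ⟨j, h.2⟩ else 0

/-- The Hölder class `H^β_Q([0,1]^{d×n}, ℝ^{d×n})`: every component of `f` is
`(β,Q)`-Hölder on the unit cube w.r.t. the entrywise sup distance. -/
def HolderClassM (d n : ℕ) (β Q : ℝ)
    (f : (Fin d → Fin n → ℝ) → Fin d → Fin n → ℝ) : Prop :=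
  ∀ X Y : Fin d → Fin n → ℝ,
    (∀ p q, X p q ∈ Set.Icc (0:ℝ) 1) → (∀ p q, Y p q ∈ Set.Icc (0:ℝ) 1) →
    ∀ r s, |f X r s - f Y r s| ≤ Q * dist X Y ^ β

/-- The `j`-th binary digit of `x` (terminating expansion for dyadic rationals). -/
def binDigit (x : ℝ) (j : ℕ) : ℤ :=
  ⌊(2:ℝ) ^ j * x⌋ - 2 * ⌊(2:ℝ) ^ (j - 1) * x⌋

/-- The truncated inner function `φ_K(x) = Σ_{j=1}^K 2 a_j^x 3^{-1-D(j-1)}`. -/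
def phiK (D K : ℕ) (x : ℝ) : ℝ :=
  ∑ j ∈ Finset.Icc 1 K, 2 * (binDigit x j : ℝ) * ((3:ℝ) ^ (1 + D * (j - 1)))⁻¹

/-- The inner function `φ(x) = Σ_{j=1}^∞ 2 a_j^x 3^{-1-D(j-1)}`. -/
def phiInf (D : ℕ) (x : ℝ) : ℝ :=
  ∑' j : ℕ, 2 * (binDigit x (j + 1) : ℝ) * ((3:ℝ) ^ (1 + D * j))⁻¹

/-- The inner matrix `Z(X)`: `Z(X)_{rs}` is independent of `r` and equals
`3^{Kdn+1} Σ_{q=1}^n Σ_{p=1}^d 3^{-((p-1)n+q)} φ_K(X_{pq}) + 1 + (s-1) 3^{Kdn}`. -/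
def innerZ (d n K : ℕ) (X : Fin d → Fin n → ℝ) (s : Fin n) : ℝ :=
  (3:ℝ) ^ (K * d * n + 1) *
      (∑ q : Fin n, ∑ p : Fin d,
        ((3:ℝ) ^ ((p : ℕ) * n + (q : ℕ) + 1))⁻¹ * phiK (d * n) K (X p q))
    + 1 + (s : ℕ) * (3:ℝ) ^ (K * d * n)

/-- The Kolmogorov–Arnold inner sum `3 Σ_{q=1}^n Σ_{p=1}^d 3^{-((p-1)n+q)} φ(X_{pq})`. -/
def innerKA (d n : ℕ) (X : Fin d → Fin n → ℝ) : ℝ :=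
  3 * ∑ q : Fin n, ∑ p : Fin d,
    ((3:ℝ) ^ ((p : ℕ) * n + (q : ℕ) + 1))⁻¹ * phiInf (d * n) (X p q)

/-- The unit cube `[0,1]^{d×n}`. -/
def unitBox (d n : ℕ) : Set (Fin d → Fin n → ℝ) :=
  {X | ∀ p q, X p q ∈ Set.Icc (0:ℝ) 1}

/-- `f` admits a Kolmogorov–Arnold representation with outer functions `g r s`
(defined on the middle-thirds Cantor set), which are Hölder with exponent
`β log 2 / (dn log 3)` and constant `2^β Q`. -/
def HasKARep (d n : ℕ) (β Q : ℝ) (f : (Fin d → Fin n → ℝ) → Fin d → Fin n → ℝ)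
    (g : Fin d → Fin n → ℝ → ℝ) : Prop :=
  (∀ r s, ∀ x ∈ cantorSet, ∀ y ∈ cantorSet,
      |g r s x - g r s y| ≤ (2:ℝ) ^ β * Q * |x - y| ^ (β * Real.log 2 / ((d * n : ℕ) * Real.log 3))) ∧
  (∀ X ∈ unitBox d n, ∀ r s, f X r s = g r s (innerKA d n X))

/-!
The heart of the matter is the continuous Kronecker theorem: for rationally independent `a`, the
subgroup `ℝ a + T ℤ^M` is dense in `ℝ^M`. If its closure `H` were proper, split `ℝ^M = V ⊕ W` with
`V` the largest subspace contained in `H`. Then `H ∩ W` contains no line, hence is discrete, so the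
projections to `W` of the vectors `T e_i` span a lattice of `W`. A coordinate functional of that
lattice, composed with the projection, is nonzero, vanishes at `a` and takes integer values `n_i`
at `T e_i`, which gives the rational relation `∑ n_i a_i = 0`.

By periodicity `σ_P (w a_m) = σ_P (w a_m + k_m T)`, so the density of the flow lets every coordinate
approach any value `σ_P y_m` with `y_m ∈ [x₁, x₂]`, from inside `(x₁, x₂)` where `σ_P` is
continuous; the intermediate value theorem fills `[σ_min, σ_max]`, and affine images of this box
cover `ℝ^M`.
-/

open Filter Topology

theorem ZLattice.exists_linearMap_ne_zero_forall_mem_int {W : Type*} [NormedAddCommGroup W]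
    [NormedSpace ℝ W] [FiniteDimensional ℝ W] [Nontrivial W] (L : Submodule ℤ W)
    [DiscreteTopology L] [IsZLattice ℝ L] :
    ∃ φ : W →ₗ[ℝ] ℝ, φ ≠ 0 ∧ ∀ x ∈ L, ∃ n : ℤ, φ x = n := by
  let b := Module.Free.chooseBasis ℤ L
  let b' := b.ofZLatticeBasis ℝ L
  obtain ⟨i⟩ := b'.index_nonempty
  refine ⟨b'.coord i, fun h => ?_, fun x hx => ⟨b.repr ⟨x, hx⟩ i, ?_⟩⟩
  · simpa using LinearMap.congr_fun h (b' i)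
  · exact b.ofZLatticeBasis_repr_apply ℝ L ⟨x, hx⟩ i

section ClosedSubgroup

variable {E : Type*} [NormedAddCommGroup E] [NormedSpace ℝ E]

def AddSubgroup.lineality (H : AddSubgroup E) : Submodule ℝ E where
  carrier := {x | ∀ t : ℝ, t • x ∈ H}
  zero_mem' t := by simp
  add_mem' hx hy t := by simpa only [smul_add] using H.add_mem (hx t) (hy t)
  smul_mem' c _ hx t := by simpa only [smul_smul] using hx (t * c)

theorem AddSubgroup.mem_of_mem_lineality {H : AddSubgroup E} {x : E} (hx : x ∈ H.lineality) :
    x ∈ H := by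
  simpa using hx 1

theorem tendsto_floor_div_mul_self (t : ℝ) {r : ℕ → ℝ} (hr : ∀ k, 0 < r k)
    (hr0 : Tendsto r atTop (𝓝 0)) : Tendsto (fun k => (⌊t / r k⌋ : ℝ) * r k) atTop (𝓝 t) := by
  have hlower : Tendsto (fun k => t - r k) atTop (𝓝 t) := by
    simpa using tendsto_const_nhds.sub hr0
  refine tendsto_of_tendsto_of_tendsto_of_le_of_le hlower tendsto_const_nhds (fun k => ?_)
    fun k => ?_
  · have := mul_le_mul_of_nonneg_right (Int.lt_floor_add_one (t / r k)).le (hr k).le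
    rw [add_mul, div_mul_cancel₀ _ (hr k).ne'] at this
    linarith
  · simpa [div_mul_cancel₀ _ (hr k).ne'] using
      mul_le_mul_of_nonneg_right (Int.floor_le (t / r k)) (hr k).le

theorem AddSubgroup.mem_lineality_of_tendsto {H : AddSubgroup E} (hH : IsClosed (H : Set E))
    {y : ℕ → E} (hyH : ∀ k, y k ∈ H) (hy0 : ∀ k, y k ≠ 0) (hy : Tendsto y atTop (𝓝 0)) {v : E}
    (hv : Tendsto (fun k => ‖y k‖⁻¹ • y k) atTop (𝓝 v)) : v ∈ H.lineality := by
  intro t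
  have hpos : ∀ k, 0 < ‖y k‖ := fun k => norm_pos_iff.2 (hy0 k)
  have hlim := (tendsto_floor_div_mul_self t hpos (tendsto_norm_zero.comp hy)).smul hv
  refine hH.mem_of_tendsto hlim (Eventually.of_forall fun k => ?_)
  have : ((⌊t / ‖y k‖⌋ : ℝ) * ‖y k‖) • (‖y k‖⁻¹ • y k) = ⌊t / ‖y k‖⌋ • y k := by
    rw [smul_smul, mul_assoc, mul_inv_cancel₀ (hpos k).ne', mul_one, Int.cast_smul_eq_zsmul]
  rw [this]
  exact H.zsmul_mem (hyH k) _

theorem AddSubgroup.discreteTopology_of_lineality_eq_bot [ProperSpace E] {H : AddSubgroup E}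
    (hH : IsClosed (H : Set E)) (hlin : H.lineality = ⊥) : DiscreteTopology H := by
  rw [discreteTopology_iff_isOpen_singleton_zero, Metric.isOpen_singleton_iff]
  by_contra! hsmall
  choose y hy using fun n : ℕ => hsmall (1 / (n + 1)) Nat.one_div_pos_of_nat
  have hy0 : ∀ k, (y k : E) ≠ 0 := fun k h => (hy k).2 (Subtype.ext h)
  have hsphere : ∀ k, ‖(y k : E)‖⁻¹ • (y k : E) ∈ Metric.sphere (0 : E) 1 := fun k => by
    simp [norm_smul, hy0 k]
  obtain ⟨v, hv, φ, hφ, hlim⟩ := (isCompact_sphere (0 : E) 1).tendsto_subseq hsphere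
  have hyφ : Tendsto (fun k => (y (φ k) : E)) atTop (𝓝 0) := by
    refine squeeze_zero_norm (fun k => ?_)
      (tendsto_one_div_add_atTop_nhds_zero_nat.comp hφ.tendsto_atTop)
    simpa [dist_eq_norm] using (hy (φ k)).1.le
  have hvH := H.mem_lineality_of_tendsto hH (fun k => (y (φ k)).2) (fun _ => hy0 _) hyφ hlim
  rw [hlin, Submodule.mem_bot] at hvH
  simp [hvH] at hv

theorem AddSubgroup.exists_linearMap_int_of_isClosed_ne_top [FiniteDimensional ℝ E] {ι : Type*}
    [Finite ι] (b : Module.Basis ι ℝ E) {H : AddSubgroup E} (hH : IsClosed (H : Set E))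
    (hb : ∀ i, b i ∈ H) (hne : H ≠ ⊤) :
    ∃ ψ : E →ₗ[ℝ] ℝ, ψ ≠ 0 ∧ (∀ x ∈ H.lineality, ψ x = 0) ∧ ∀ i, ∃ n : ℤ, ψ (b i) = n := by
  obtain ⟨W, hW⟩ := Submodule.exists_isCompl H.lineality
  let f := W.projectionOnto H.lineality hW.symm
  have hfH : ∀ x ∈ H, (f x : E) ∈ H := fun x hx => by
    have := H.sub_mem hx (H.mem_of_mem_lineality (W.sub_projection_mem hW.symm x))
    rwa [sub_sub_cancel] at this
  let K : AddSubgroup W := H.comap W.subtype.toAddMonoidHom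
  have hK : DiscreteTopology K := by
    refine K.discreteTopology_of_lineality_eq_bot (hH.preimage continuous_subtype_val) ?_
    refine (Submodule.eq_bot_iff _).2 fun u hu => Subtype.ext ?_
    exact (Submodule.disjoint_def.1 hW.disjoint) _ (fun t => hu t) u.2
  let L : Submodule ℤ W := Submodule.span ℤ (Set.range (f ∘ b))
  have hLK : (L : Set W) ⊆ K := by
    rw [← L.coe_toAddSubgroup, SetLike.coe_subset_coe, Submodule.span_int_eq_addSubgroupClosure,
      AddSubgroup.closure_le]
    rintro _ ⟨i, rfl⟩
    exact hfH _ (hb i)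
  have : DiscreteTopology L := DiscreteTopology.of_subset hK hLK
  have : IsZLattice ℝ L := ⟨by
    rw [Submodule.span_span_of_tower, Set.range_comp, Submodule.span_image, b.span_eq,
      Submodule.map_top, LinearMap.range_eq_top.2 (Submodule.projectionOnto_surjective _)]⟩
  have : Nontrivial W := by
    refine Submodule.nontrivial_iff_ne_bot.2 fun hW0 => hne (eq_top_iff.2 fun x _ => ?_)
    exact H.mem_of_mem_lineality ((eq_top_of_isCompl_bot (hW0 ▸ hW)).symm ▸ Submodule.mem_top)
  obtain ⟨φ, hφ0, hφL⟩ := ZLattice.exists_linearMap_ne_zero_forall_mem_int L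
  refine ⟨φ ∘ₗ f, fun h => hφ0 ?_, fun x hx => ?_, fun i => hφL _ (Submodule.subset_span ⟨i, rfl⟩)⟩
  · exact (LinearMap.cancel_right (Submodule.projectionOnto_surjective _)).1
      (h.trans (LinearMap.zero_comp f).symm)
  · rw [LinearMap.comp_apply, (Submodule.projectionOnto_apply_eq_zero_iff _).2 hx, map_zero]

end ClosedSubgroup

section Kronecker

variable {ι : Type*} [Fintype ι]

def kroneckerSubgroup (a : ι → ℝ) (T : ℝ) : AddSubgroup (ι → ℝ) where
  carrier := {p | ∃ (w : ℝ) (k : ι → ℤ), p = fun i => w * a i + k i * T}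
  zero_mem' := ⟨0, 0, by ext; simp⟩
  add_mem' := by
    rintro _ _ ⟨w, k, rfl⟩ ⟨w', k', rfl⟩
    exact ⟨w + w', k + k', by ext; simp only [Pi.add_apply, Int.cast_add]; ring⟩
  neg_mem' := by
    rintro _ ⟨w, k, rfl⟩
    exact ⟨-w, -k, by ext; simp only [Pi.neg_apply, Int.cast_neg]; ring⟩

theorem dense_kroneckerSubgroup {a : ι → ℝ} (ha : LinearIndependent ℚ a) {T : ℝ} (hT : T ≠ 0) :
    Dense (kroneckerSubgroup a T : Set (ι → ℝ)) := by
  classical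
  by_contra hdense
  let G := kroneckerSubgroup a T
  let b := (Pi.basisFun ℝ ι).isUnitSMul fun _ => hT.isUnit
  have hb : ∀ i, b i = T • Pi.single i 1 := fun i => Module.Basis.isUnitSMul_apply _ i
  have hbG : ∀ i, b i ∈ G.topologicalClosure := fun i => G.le_topologicalClosure
    ⟨0, Pi.single i 1, by ext j; by_cases h : j = i <;> simp [hb, h]⟩
  have hne : G.topologicalClosure ≠ ⊤ := fun h => hdense <| by
    rw [dense_iff_closure_eq, ← AddSubgroup.topologicalClosure_coe, h, AddSubgroup.coe_top]
  obtain ⟨ψ, hψ0, hψa, hψb⟩ :=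
    AddSubgroup.exists_linearMap_int_of_isClosed_ne_top b G.isClosed_topologicalClosure hbG hne
  choose n hn using hψb
  have ha_lin : a ∈ G.topologicalClosure.lineality := fun t =>
    G.le_topologicalClosure ⟨t, 0, by ext; simp⟩
  have hrel : ∑ i, (n i : ℚ) • a i = 0 := by
    have hTa : T • a = ∑ i, a i • b i := by
      ext j
      simp [hb, Finset.sum_apply, Pi.single_apply, mul_comm]
    have h := hψa _ (Submodule.smul_mem _ T ha_lin)
    rw [hTa, map_sum] at h
    simpa [hn, Rat.smul_def, mul_comm] using h
  have hn0 : ∀ i, n i = 0 := fun i => by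
    exact_mod_cast Fintype.linearIndependent_iff.1 ha _ hrel i
  exact hψ0 (b.ext fun i => by simp [hn, hn0])

end Kronecker

theorem ContinuousOn.exists_isOpen_nonempty_mapsTo {X Y : Type*} [TopologicalSpace X]
    [TopologicalSpace Y] {f : X → Y} {s : Set X} (hf : ContinuousOn f s) {y : X} (hy : y ∈ s)
    (hys : y ∈ closure (interior s)) {u : Set Y} (hu : IsOpen u) (hfy : f y ∈ u) :
    ∃ O : Set X, IsOpen O ∧ O.Nonempty ∧ MapsTo f O u := by
  obtain ⟨o, ho, hyo, hos⟩ := mem_nhdsWithin.1 (hf y hy (hu.mem_nhds hfy))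
  refine ⟨o ∩ interior s, ho.inter isOpen_interior, _root_.mem_closure_iff.1 hys o ho hyo, ?_⟩
  exact fun x hx => hos ⟨hx.1, interior_subset hx.2⟩

theorem pi_image_subset_closure_image_of_dense {ι : Type*} [Finite ι] {f : ℝ → ℝ} {s : Set ℝ}
    (hf : ContinuousOn f s) (hs : s ⊆ closure (interior s)) {D : Set (ι → ℝ)} (hD : Dense D) :
    univ.pi (fun _ => f '' s) ⊆ closure ((fun p i => f (p i)) '' D) := by
  intro v hv
  rw [_root_.mem_closure_iff]
  intro N hN hvN
  obtain ⟨u, hu, huN⟩ := isOpen_pi_iff'.1 hN v hvN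
  choose y hy hfy using fun i => hv i (mem_univ i)
  choose O hO hOne hOu using fun i =>
    hf.exists_isOpen_nonempty_mapsTo (hy i) (hs (hy i)) (hu i).1 ((hfy i).symm ▸ (hu i).2)
  obtain ⟨p, hpO, hpD⟩ := hD.inter_open_nonempty _ (isOpen_set_pi finite_univ fun i _ => hO i)
    (univ_pi_nonempty_iff.2 hOne)
  exact ⟨_, huN fun i _ => hOu i (hpO i (mem_univ i)), p, hpD, rfl⟩

theorem dense_affine_of_pi_Icc_subset_closure {ι : Type*} [Fintype ι] {S : Set (ι → ℝ)}
    {α β : ℝ} (hαβ : α < β) (hS : univ.pi (fun _ => Icc α β) ⊆ closure S) :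
    Dense {v : ι → ℝ | ∃ u c : ℝ, ∃ x ∈ S, v = fun i => u * x i + c} := by
  intro z
  set R := ‖z‖ + 1
  set u := 2 * R / (β - α)
  set c := -R - u * α
  have hu : 0 < u := by positivity
  have hx : (fun i => (z i - c) / u) ∈ univ.pi (fun _ => Icc α β) := fun i _ => by
    have hzi := abs_le.1 ((Real.norm_eq_abs _).symm.trans_le (norm_le_pi_norm z i))
    have huβα : u * (β - α) = 2 * R := div_mul_cancel₀ _ (sub_pos.2 hαβ).ne'
    constructor
    · rw [le_div_iff₀ hu]; nlinarith
    · rw [div_le_iff₀ hu]; nlinarith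
  have hcont : Continuous fun (x : ι → ℝ) i => u * x i + c := by fun_prop
  have hz := image_closure_subset_closure_image hcont ⟨_, hS hx, rfl⟩
  refine closure_mono ?_ (by convert hz using 1; ext i; field_simp; ring)
  rintro _ ⟨x, hxS, rfl⟩
  exact ⟨u, c, x, hxS, rfl⟩

theorem stmt16_general (M : ℕ) (a : Fin M → ℝ) (ha : LinearIndependent ℚ a)
    (σP : ℝ → ℝ) (T : ℝ) (hT : 0 < T) (hper : ∀ x, σP (x + T) = σP x)
    (x₁ x₂ : ℝ) (h12 : x₁ < x₂)
    (hcont : ContinuousOn σP (Set.Icc x₁ x₂))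
    (σmin σmax : ℝ)
    (hmin : IsLeast (σP '' Set.Icc x₁ x₂) σmin)
    (hmax : IsGreatest (σP '' Set.Icc x₁ x₂) σmax) :
    (Set.univ.pi fun _ : Fin M => Set.Icc σmin σmax) ⊆
        closure {v : Fin M → ℝ | ∃ w : ℝ, v = fun m => σP (w * a m)} ∧
      (σmin < σmax →
        Dense {v : Fin M → ℝ | ∃ u c w : ℝ, v = fun m => u * σP (w * a m) + c}) := by
  have hbox : Icc σmin σmax ⊆ σP '' Icc x₁ x₂ :=
    (isPreconnected_Icc.image _ hcont).Icc_subset hmin.1 hmax.1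
  have hflow := pi_image_subset_closure_image_of_dense hcont
    (by rw [interior_Icc, closure_Ioo h12.ne]) (dense_kroneckerSubgroup ha hT.ne')
  have hclosure : (univ.pi fun _ : Fin M => Icc σmin σmax) ⊆
      closure {v : Fin M → ℝ | ∃ w : ℝ, v = fun m => σP (w * a m)} := by
    refine (pi_mono fun _ _ => hbox).trans (hflow.trans (closure_mono ?_))
    rintro _ ⟨_, ⟨w, k, rfl⟩, rfl⟩
    exact ⟨w, funext fun m => Function.Periodic.int_mul hper (k m) (w * a m)⟩
  refine ⟨hclosure, fun hlt => (dense_affine_of_pi_Icc_subset_closure hlt hclosure).mono ?_⟩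
  rintro _ ⟨u, c, _, ⟨w, rfl⟩, rfl⟩
  exact ⟨u, c, w, rfl⟩

theorem stmt16 (M : ℕ) (hM : 1 ≤ M) (a : Fin M → ℝ) (ha : LinearIndependent ℚ a)
    (σP : ℝ → ℝ) (T : ℝ) (hT : 0 < T) (hper : ∀ x, σP (x + T) = σP x)
    (x₁ x₂ : ℝ) (h12 : x₁ < x₂) (h12T : x₂ - x₁ < T)
    (hcont : ContinuousOn σP (Set.Icc x₁ x₂))
    (σmin σmax : ℝ)
    (hmin : IsLeast (σP '' Set.Icc x₁ x₂) σmin)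
    (hmax : IsGreatest (σP '' Set.Icc x₁ x₂) σmax) :
    (Set.univ.pi fun _ : Fin M => Set.Icc σmin σmax) ⊆
        closure {v : Fin M → ℝ | ∃ w : ℝ, v = fun m => σP (w * a m)} ∧
      (σmin < σmax →
        Dense {v : Fin M → ℝ | ∃ u c w : ℝ, v = fun m => u * σP (w * a m) + c}) :=
  stmt16_general M a ha σP T hT hper x₁ x₂ h12 hcont σmin σmax hmin hmax

end
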